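/- arXiv:1004.3492 — 4 statements merged into one kernel-verified Lean document; each statement's English description precedes it below -/
import Mathlib

section
/- For N ≥ 3, the unitary matrix W = e^{2πi/N}·I lies in SU(N) and is a critical point of G(W)=(1/N)·Re Tr(W) over SU(N) at which the second derivative Re Tr(W A²) is strictly negative for all nonzero A ∈ su(N), yet G(W) = cos(2π/N) < 1. Hence SU(N) gate optimization has suboptimal attractive critical points whenever N ≥ 5 ensures cos(2π/N) > 0 (and more generally for N ≥ 3 as local maxima with value cos(2π/N)). -/
open Matrix

lemma aux_trace_sq {N : ℕ} (A : Matrix (Fin N) (Fin N) ℂ) (hA : Aᴴ = -A) :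
    Matrix.trace (A * A) = -∑ i, ∑ j, (Complex.normSq (A i j) : ℂ) := by
  have h : ∀ i j, A j i = -(starRingEnd ℂ) (A i j) := by
    intro i j
    have := congrFun (congrFun hA j) i
    simp [conjTranspose_apply] at this
    rw [this]; simp
  simp only [Matrix.trace, Matrix.diag, Matrix.mul_apply]
  rw [← Finset.sum_neg_distrib]
  congr 1; ext i; rw [← Finset.sum_neg_distrib]; congr 1; ext j
  rw [h i j]
  ring_nf
  rw [Complex.normSq_eq_conj_mul_self]
  ring

/-- For `N ≥ 3`, the matrix `W = e^{2πi/N}·I` lies in `SU(N)`, is a critical point of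
`G(W) = (1/N)·Re Tr W` over `SU(N)` with value `cos(2π/N) < 1`, and (for `N ≥ 5`,
which ensures `cos(2π/N) > 0`) the second derivative `Re Tr(W A²)` is strictly
negative for all nonzero `A ∈ su(N)`: a suboptimal attractive critical point. -/
theorem stmt7 {N : ℕ} (hN : 3 ≤ N)
    (W : Matrix (Fin N) (Fin N) ℂ)
    (hW : W = Complex.exp (2 * Real.pi * Complex.I / N) • (1 : Matrix (Fin N) (Fin N) ℂ)) :
    Wᴴ * W = 1 ∧ W.det = 1 ∧
    (∀ A : Matrix (Fin N) (Fin N) ℂ, Aᴴ = -A → Matrix.trace A = 0 →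
      (Matrix.trace (W * A)).re = 0) ∧
    (1 / (N : ℝ)) * (Matrix.trace W).re = Real.cos (2 * Real.pi / N) ∧
    Real.cos (2 * Real.pi / N) < 1 ∧
    (5 ≤ N → 0 < Real.cos (2 * Real.pi / N) ∧
      ∀ A : Matrix (Fin N) (Fin N) ℂ, Aᴴ = -A → Matrix.trace A = 0 → A ≠ 0 →
        (Matrix.trace (W * A ^ 2)).re < 0) := by
  have hN0 : (N : ℂ) ≠ 0 := Nat.cast_ne_zero.2 (by omega)
  have hNr : (0 : ℝ) < N := by positivity
  set c : ℂ := Complex.exp (2 * Real.pi * Complex.I / N) with hc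
  have hrw : 2 * Real.pi * Complex.I / N = ((2 * Real.pi / N : ℝ) : ℂ) * Complex.I := by
    push_cast; ring
  have hcre : c.re = Real.cos (2 * Real.pi / N) := by
    rw [hc, hrw, Complex.exp_ofReal_mul_I_re]
  have hcim : c.im = Real.sin (2 * Real.pi / N) := by
    rw [hc, hrw, Complex.exp_ofReal_mul_I_im]
  have hθpos : 0 < 2 * Real.pi / N := by positivity
  have hθlt : 2 * Real.pi / N ≤ 2 * Real.pi / 3 := by
    apply div_le_div_of_nonneg_left (by positivity) (by norm_num)
    exact_mod_cast hN
  refine ⟨?_, ?_, ?_, ?_, ?_, ?_⟩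
  · rw [hW]
    simp only [conjTranspose_smul, conjTranspose_one]
    rw [smul_mul_smul_comm, one_mul]
    have : star c * c = 1 := by
      rw [hc]
      rw [show star (Complex.exp (2 * Real.pi * Complex.I / N)) =
        Complex.exp ((starRingEnd ℂ) (2 * Real.pi * Complex.I / N)) from
        (Complex.exp_conj _).symm, ← Complex.exp_add]
      rw [show (starRingEnd ℂ) (2 * Real.pi * Complex.I / N) +
        2 * Real.pi * Complex.I / N = 0 by
        simp [map_div₀, Complex.conj_I, map_ofNat]; ring]
      exact Complex.exp_zero
    rw [this, one_smul]
  · rw [hW, det_smul, det_one, mul_one, Fintype.card_fin]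
    rw [hc, ← Complex.exp_nat_mul]
    rw [show (N : ℂ) * (2 * Real.pi * Complex.I / N) = 2 * Real.pi * Complex.I by
      field_simp]
    exact_mod_cast Complex.exp_two_pi_mul_I
  · intro A _ hAtr
    rw [hW, smul_mul_assoc, one_mul, trace_smul, hAtr, smul_zero, Complex.zero_re]
  · rw [hW, trace_smul, trace_one, Fintype.card_fin, smul_eq_mul,
      Complex.mul_re]
    simp only [Complex.natCast_re, Complex.natCast_im, mul_zero, sub_zero, hcre]
    field_simp
  · refine lt_of_le_of_ne (Real.cos_le_one _) ?_
    intro h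
    rw [Real.cos_eq_one_iff_of_lt_of_lt (by linarith) (by
      calc 2 * Real.pi / N ≤ 2 * Real.pi / 3 := hθlt
        _ < 2 * Real.pi := by have := Real.pi_pos; linarith)] at h
    exact absurd h (ne_of_gt hθpos)
  · intro hN5
    have hθlt2 : 2 * Real.pi / N < Real.pi / 2 := by
      have : 2 * Real.pi / N ≤ 2 * Real.pi / 5 := by
        apply div_le_div_of_nonneg_left (by positivity) (by norm_num)
        exact_mod_cast hN5
      have := Real.pi_pos
      nlinarith
    have hcos : 0 < Real.cos (2 * Real.pi / N) :=
      Real.cos_pos_of_mem_Ioo ⟨by have := Real.pi_pos; linarith, hθlt2⟩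
    refine ⟨hcos, fun A hA _ hA0 => ?_⟩
    rw [hW, smul_mul_assoc, one_mul, trace_smul, sq, aux_trace_sq A hA, smul_eq_mul]
    set s : ℝ := ∑ i, ∑ j, Complex.normSq (A i j) with hs
    have hsum : (∑ i, ∑ j, (Complex.normSq (A i j) : ℂ)) = (s : ℂ) := by
      rw [hs]; push_cast; ring
    have hspos : 0 < s := by
      have hsnn : 0 ≤ s := Finset.sum_nonneg fun i _ =>
        Finset.sum_nonneg fun j _ => Complex.normSq_nonneg _
      rcases hsnn.lt_or_eq with h | h
      · exact h
      · exfalso; apply hA0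
        ext i j
        have h1 : ∀ i ∈ Finset.univ, (0:ℝ) ≤ ∑ j, Complex.normSq (A i j) :=
          fun i _ => Finset.sum_nonneg fun j _ => Complex.normSq_nonneg _
        have h2 := (Finset.sum_eq_zero_iff_of_nonneg h1).1 h.symm i (Finset.mem_univ i)
        have h3 := (Finset.sum_eq_zero_iff_of_nonneg
          (fun j _ => Complex.normSq_nonneg (A i j))).1 h2 j (Finset.mem_univ j)
        simpa using Complex.normSq_eq_zero.1 h3
    rw [hsum, Complex.mul_re]
    simp only [Complex.neg_re, Complex.neg_im, Complex.ofReal_re, Complex.ofReal_im,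
      mul_zero, sub_zero, hcre]
    nlinarith
end

section
/- Let U ∈ U(N) and V ∈ U(N), and consider G'(U) = (1/N²)|Tr(V†U)|². If W = V†U satisfies Re[conj(Tr W)·Tr(WA)] = 0 for all A ∈ su(N), then, letting γ = Tr(W), the matrix conj(γ)·W equals iα·I + R for some real α and Hermitian R whose eigenvalues all have the same absolute value. -/
/-!
Put `M = conj(γ) W`, so the hypothesis reads `Re Tr(M A) = 0` on `su(N)`. For skew-Hermitian `A`,
`2 Re Tr(M A) = Tr((M - M†) A)`. Subtracting from `M` the imaginary scalar `iα` that makes its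
trace real keeps the hypothesis, and then `A = M - M†` is itself traceless skew-Hermitian, giving
`Tr(A† A) = 0`; so `M = iα + R` with `R` Hermitian. As `M† M = |γ|² W† W = |γ|²`, expanding
`(R - iα)(R + iα)` gives `R² = |γ|² - α²`, so every eigenvalue `μ` of `R` has `μ² = |γ|² - α²`.
-/

open Matrix Complex
open scoped ComplexOrder

theorem spectrum.sq_eq_of_sq_eq_algebraMap {𝕜 A : Type*} [Field 𝕜] [Ring A] [Algebra 𝕜 A]
    {a : A} {c μ : 𝕜} (ha : a ^ 2 = algebraMap 𝕜 A c) (hμ : μ ∈ spectrum 𝕜 a) : μ ^ 2 = c := by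
  rcases subsingleton_or_nontrivial A with _ | _
  · simp [spectrum.of_subsingleton] at hμ
  simpa [ha] using spectrum.pow_mem_pow a 2 hμ

namespace Matrix

variable {n : Type*} [Fintype n]

theorem two_mul_re_trace_mul_eq_trace_sub_conjTranspose_mul (M : Matrix n n ℂ)
    {A : Matrix n n ℂ} (hA : Aᴴ = -A) :
    (2 * (trace (M * A)).re : ℂ) = trace ((M - Mᴴ) * A) := by
  have hconj : (starRingEnd ℂ) (trace (M * A)) = -trace (Mᴴ * A) := by
    rw [← star_def, ← trace_conjTranspose, conjTranspose_mul, hA, neg_mul, trace_neg,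
      trace_mul_comm]
  rw [re_eq_add_conj, hconj, sub_mul, trace_sub]
  ring

theorem isHermitian_of_re_trace_mul_eq_zero {R : Matrix n n ℂ} (htr : (trace R).im = 0)
    (hcrit : ∀ A : Matrix n n ℂ, Aᴴ = -A → trace A = 0 → (trace (R * A)).re = 0) :
    R.IsHermitian := by
  set A := R - Rᴴ with hAdef
  have hA : Aᴴ = -A := by
    rw [conjTranspose_sub, conjTranspose_conjTranspose, neg_sub]
  have hAtr : trace A = 0 := by
    rw [trace_sub, trace_conjTranspose, sub_eq_zero]
    exact (conj_eq_iff_im.mpr htr).symm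
  have hAA : trace (Aᴴ * A) = 0 := by
    have h := two_mul_re_trace_mul_eq_trace_sub_conjTranspose_mul R hA
    rw [hcrit A hA hAtr, ← hAdef] at h
    rw [hA, neg_mul, trace_neg, ← h]
    simp
  exact (sub_eq_zero.mp (trace_conjTranspose_mul_self_eq_zero_iff.mp hAA)).symm

theorem exists_isHermitian_sub_smul_one [DecidableEq n] {M : Matrix n n ℂ}
    (hcrit : ∀ A : Matrix n n ℂ, Aᴴ = -A → trace A = 0 → (trace (M * A)).re = 0) :
    ∃ α : ℝ, (M - ((α : ℂ) * I) • (1 : Matrix n n ℂ)).IsHermitian := by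
  rcases isEmpty_or_nonempty n with _ | _
  · exact ⟨0, Subsingleton.elim _ _⟩
  refine ⟨(trace M).im / Fintype.card n, isHermitian_of_re_trace_mul_eq_zero ?_ ?_⟩
  · simp [trace_sub, trace_smul, trace_one]
  · intro A hA hAtr
    simpa [sub_mul, trace_sub, trace_smul, hAtr] using hcrit A hA hAtr

theorem conjTranspose_mul_self_smul_I_add [DecidableEq n] {R : Matrix n n ℂ} (hR : R.IsHermitian)
    (α : ℝ) :
    (((α : ℂ) * I) • (1 : Matrix n n ℂ) + R)ᴴ * (((α : ℂ) * I) • 1 + R) =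
      R ^ 2 + ((α : ℂ) ^ 2) • 1 := by
  rw [conjTranspose_add, conjTranspose_smul, conjTranspose_one, hR.eq,
    show star ((α : ℂ) * I) = -((α : ℂ) * I) by simp]
  simp only [add_mul, mul_add, Matrix.smul_mul, Matrix.mul_smul, Matrix.one_mul, Matrix.mul_one,
    smul_smul, sq]
  linear_combination (norm := module) (-(α : ℂ) ^ 2 * I_sq) • (1 : Matrix n n ℂ)

end Matrix

/-- If `W = V†U` satisfies the critical point condition
`Re[conj(Tr W)·Tr(WA)] = 0` for all `A ∈ su(N)` of the phase-invariant fidelity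
`G'(U) = |Tr(V†U)|²/N²`, then with `γ = Tr W` the matrix `conj(γ)·W` equals
`iα·I + R` with `α` real and `R` Hermitian with eigenvalues all of the same
absolute value. -/
theorem stmt8 {N : ℕ} (V U : Matrix (Fin N) (Fin N) ℂ)
    (hV : Vᴴ * V = 1) (hU : Uᴴ * U = 1)
    (hcrit : ∀ A : Matrix (Fin N) (Fin N) ℂ, Aᴴ = -A → Matrix.trace A = 0 →
      ((starRingEnd ℂ) (Matrix.trace (Vᴴ * U)) * Matrix.trace ((Vᴴ * U) * A)).re = 0) :
    ∃ (α : ℝ) (R : Matrix (Fin N) (Fin N) ℂ), Rᴴ = R ∧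
      ((starRingEnd ℂ) (Matrix.trace (Vᴴ * U))) • (Vᴴ * U) =
        ((α : ℂ) * Complex.I) • (1 : Matrix (Fin N) (Fin N) ℂ) + R ∧
      ∃ c : ℝ, ∀ μ ∈ spectrum ℂ R, ‖μ‖ = c := by
  set W := Vᴴ * U
  set γ := trace W
  have hW : Wᴴ * W = 1 := by
    rw [conjTranspose_mul, conjTranspose_conjTranspose, Matrix.mul_assoc, ← Matrix.mul_assoc V,
      mul_eq_one_comm.mp hV, Matrix.one_mul, hU]
  obtain ⟨α, hR⟩ := exists_isHermitian_sub_smul_one (M := starRingEnd ℂ γ • W)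
    fun A hA hAtr ↦ by simpa [Matrix.smul_mul, trace_smul] using hcrit A hA hAtr
  set R := starRingEnd ℂ γ • W - ((α : ℂ) * I) • 1
  have hM : starRingEnd ℂ γ • W = ((α : ℂ) * I) • 1 + R := by
    rw [add_sub_cancel]
  have hR2 : R ^ 2 = algebraMap ℂ _ ((normSq γ - α ^ 2 : ℝ) : ℂ) := by
    have h := conjTranspose_mul_self_smul_I_add hR α
    rw [← hM, conjTranspose_smul, Matrix.smul_mul, Matrix.mul_smul, hW, smul_smul] at h
    rw [Algebra.algebraMap_eq_smul_one, eq_sub_of_add_eq h.symm, ← sub_smul]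
    simp [mul_conj]
  refine ⟨α, R, hR, hM, √|normSq γ - α ^ 2|, fun μ hμ ↦ ?_⟩
  rw [← abs_norm μ, ← Real.sqrt_sq_eq_abs, ← norm_pow,
    spectrum.sq_eq_of_sq_eq_algebraMap hR2 hμ, norm_real, Real.norm_eq_abs]
end

section
/- Let H₁ be a Hermitian N×N matrix with maximal eigenvalue λ_max and minimal eigenvalue λ_min, and suppose for every μ ∈ ℝ the matrix H₀ + μH₁ has N distinct eigenvalues. Let v^max(μ) and v_min(μ) be continuously chosen unit eigenvectors of (H₀+μH₁)/(|μ|+1) corresponding to its largest and smallest eigenvalues. Then either λ_max = λ_min (H₁ is a scalar multiple of I), or there exists a finite μ with ⟨v^max(μ), H₁ v^max(μ)⟩ = ⟨v_min(μ), H₁ v_min(μ)⟩. -/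
/-!
Write `⟨x|A|x⟩` for the (real) expectation of a Hermitian `A` at a unit vector `x`. Since `λ - A`
is positive semidefinite when `λ` bounds the spectrum from above, `v^max(μ)` maximizes
`⟨x|H₀|x⟩ + μ ⟨x|H₁|x⟩` over unit vectors, and `v_min(μ)` minimizes it. As `⟨x|H₀|x⟩` is bounded
by some `C`, comparing with eigenvectors `u, w` of `H₁` for `λ_max > λ_min` gives
`μ (⟨v^max|H₁|v^max⟩ - ⟨v_min|H₁|v_min⟩) ≥ |μ| (λ_max - λ_min) - 4C`, so the continuous difference
changes sign between large negative and large positive `μ`.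
-/

open Matrix
open scoped ComplexOrder

section Extremal

variable {α : Type*} {s : Set α} {f g : α → ℝ} {C μ : ℝ} {v x : α}

lemma mul_le_mul_add_of_isMaxOn (hv : IsMaxOn (fun y ↦ f y + μ * g y) s v) (hvs : v ∈ s)
    (hf : ∀ y ∈ s, |f y| ≤ C) (hx : x ∈ s) : μ * g x ≤ μ * g v + 2 * C := by
  have hmax : f x + μ * g x ≤ f v + μ * g v := hv hx
  linarith [(abs_le.mp (hf x hx)).1, (abs_le.mp (hf v hvs)).2]

lemma mul_le_mul_add_of_isMinOn (hv : IsMinOn (fun y ↦ f y + μ * g y) s v) (hvs : v ∈ s)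
    (hf : ∀ y ∈ s, |f y| ≤ C) (hx : x ∈ s) : μ * g v ≤ μ * g x + 2 * C := by
  have hmin : f v + μ * g v ≤ f x + μ * g x := hv hx
  linarith [(abs_le.mp (hf x hx)).2, (abs_le.mp (hf v hvs)).1]

lemma IsMaxOn.of_const_mul {r : ℝ} (hr : 0 < r) (h : IsMaxOn (fun y ↦ r * f y) s v) :
    IsMaxOn f s v := fun _ hx ↦ le_of_mul_le_mul_left (h hx) hr

lemma IsMinOn.of_const_mul {r : ℝ} (hr : 0 < r) (h : IsMinOn (fun y ↦ r * f y) s v) :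
    IsMinOn f s v := fun _ hx ↦ le_of_mul_le_mul_left (h hx) hr

theorem exists_eq_of_isMaxOn_of_isMinOn {vmax vmin : ℝ → α}
    (hmax_mem : ∀ μ, vmax μ ∈ s) (hmin_mem : ∀ μ, vmin μ ∈ s)
    (hmax : ∀ μ, IsMaxOn (fun y ↦ f y + μ * g y) s (vmax μ))
    (hmin : ∀ μ, IsMinOn (fun y ↦ f y + μ * g y) s (vmin μ))
    (hf : ∀ y ∈ s, |f y| ≤ C) (hcont : Continuous fun μ ↦ g (vmax μ) - g (vmin μ))
    {x y : α} (hx : x ∈ s) (hy : y ∈ s) (hxy : g y < g x) :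
    ∃ μ, g (vmax μ) = g (vmin μ) := by
  set D := fun μ ↦ g (vmax μ) - g (vmin μ)
  -- Bounded `f` is negligible against `μ g` for large `|μ|`, so `D` takes the sign of `μ`.
  have key : ∀ μ {x' y'}, x' ∈ s → y' ∈ s → μ * (g x' - g y') - 4 * C ≤ μ * D μ := by
    intro μ x' y' hx' hy'
    linarith [mul_le_mul_add_of_isMaxOn (hmax μ) (hmax_mem μ) hf hx',
      mul_le_mul_add_of_isMinOn (hmin μ) (hmin_mem μ) hf hy']
  have hC : 0 ≤ C := (abs_nonneg _).trans (hf x hx)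
  set T := (4 * C + 1) / (g x - g y)
  have hT : T * (g x - g y) = 4 * C + 1 := div_mul_cancel₀ _ (sub_pos.mpr hxy).ne'
  have hT_pos : 0 < T := div_pos (by linarith) (sub_pos.mpr hxy)
  have hpos : 0 < D T := pos_of_mul_pos_right (by linarith [key T hx hy]) hT_pos.le
  have hneg : D (-T) < 0 := by nlinarith [key (-T) hy hx]
  obtain ⟨μ, hμ⟩ := mem_range_of_exists_le_of_exists_ge hcont ⟨-T, hneg.le⟩ ⟨T, hpos.le⟩
  exact ⟨μ, sub_eq_zero.mp hμ⟩

end Extremal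

namespace Matrix

variable {n 𝕜 : Type*} [Fintype n] [RCLike 𝕜]

noncomputable def expectation (A : Matrix n n 𝕜) (x : n → 𝕜) : ℝ :=
  RCLike.re (star x ⬝ᵥ A *ᵥ x)

lemma expectation_add (A B : Matrix n n 𝕜) (x : n → 𝕜) :
    expectation (A + B) x = expectation A x + expectation B x := by
  simp [expectation, add_mulVec, dotProduct_add]

lemma expectation_real_smul (r : ℝ) (A : Matrix n n 𝕜) (x : n → 𝕜) :
    expectation (r • A) x = r * expectation A x := by
  simp [expectation, smul_mulVec, dotProduct_smul, RCLike.smul_re]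

lemma continuous_expectation (A : Matrix n n 𝕜) : Continuous (expectation A) := by
  unfold expectation
  fun_prop

lemma expectation_eq_of_mulVec_eq_smul {A : Matrix n n 𝕜} {v : n → 𝕜} {l : ℝ}
    (hv : A *ᵥ v = (l : 𝕜) • v) (hunit : star v ⬝ᵥ v = 1) : expectation A v = l := by
  rw [expectation, hv, dotProduct_smul, hunit, smul_eq_mul, mul_one, RCLike.ofReal_re]

namespace IsHermitian

variable {A : Matrix n n 𝕜}

lemma ofReal_expectation (hA : A.IsHermitian) (x : n → 𝕜) :
    (expectation A x : 𝕜) = star x ⬝ᵥ A *ᵥ x := by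
  rw [expectation, ← RCLike.re_add_im (star x ⬝ᵥ A *ᵥ x), hA.im_star_dotProduct_mulVec_self]
  simp

variable [DecidableEq n]

lemma expectation_le_of_spectrum_le (hA : A.IsHermitian) {b : ℝ}
    (hb : ∀ z ∈ spectrum 𝕜 A, RCLike.re z ≤ b) (x : n → 𝕜) :
    expectation A x ≤ b * RCLike.re (star x ⬝ᵥ x) := by
  have hb' : ∀ i, hA.eigenvalues i ≤ b := fun i ↦ by
    have := hb _ (by rw [hA.spectrum_eq_image_range]; exact ⟨_, ⟨i, rfl⟩, rfl⟩)
    rwa [RCLike.ofReal_re] at this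
  have hpsd : (algebraMap 𝕜 (Matrix n n 𝕜) b - A).PosSemidef := by
    refine posSemidef_iff_isHermitian_and_spectrum_nonneg.mpr ⟨?_, ?_⟩
    · exact (IsSelfAdjoint.algebraMap _ (RCLike.conj_ofReal b)).sub hA
    · rw [← spectrum.singleton_sub_eq, hA.spectrum_eq_image_range]
      rintro _ ⟨_, rfl, _, ⟨_, ⟨i, rfl⟩, rfl⟩, rfl⟩
      show 0 ≤ (b : 𝕜) - hA.eigenvalues i
      rw [← RCLike.ofReal_sub, RCLike.ofReal_nonneg, sub_nonneg]
      exact hb' i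
  have := hpsd.re_dotProduct_nonneg x
  rw [sub_mulVec, dotProduct_sub, map_sub, Algebra.algebraMap_eq_smul_one, smul_mulVec,
    one_mulVec, dotProduct_smul, smul_eq_mul, RCLike.re_ofReal_mul] at this
  rw [expectation]
  linarith

lemma le_expectation_of_le_spectrum (hA : A.IsHermitian) {b : ℝ}
    (hb : ∀ z ∈ spectrum 𝕜 A, b ≤ RCLike.re z) (x : n → 𝕜) :
    b * RCLike.re (star x ⬝ᵥ x) ≤ expectation A x := by
  have hneg : ∀ z ∈ spectrum 𝕜 (-A), RCLike.re z ≤ -b := fun z hz ↦ by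
    rw [← spectrum.neg_eq] at hz
    linarith [map_neg (RCLike.re (K := 𝕜)) z ▸ hb _ hz]
  have := hA.neg.expectation_le_of_spectrum_le hneg x
  rw [← neg_one_smul ℝ A, expectation_real_smul] at this
  linarith

lemma exists_abs_expectation_le (hA : A.IsHermitian) :
    ∃ C, ∀ x, star x ⬝ᵥ x = 1 → |expectation A x| ≤ C := by
  set C := ∑ i, |hA.eigenvalues i|
  have hC : ∀ z ∈ spectrum 𝕜 A, |RCLike.re z| ≤ C := by
    rw [hA.spectrum_eq_image_range]
    rintro _ ⟨_, ⟨i, rfl⟩, rfl⟩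
    rw [RCLike.ofReal_re]
    exact Finset.single_le_sum (f := fun i ↦ |hA.eigenvalues i|) (fun _ _ ↦ abs_nonneg _)
      (Finset.mem_univ i)
  refine ⟨C, fun x hx ↦ abs_le.mpr ⟨?_, ?_⟩⟩
  · simpa [hx] using hA.le_expectation_of_le_spectrum (fun z hz ↦ (abs_le.mp (hC z hz)).1) x
  · simpa [hx] using hA.expectation_le_of_spectrum_le (fun z hz ↦ (abs_le.mp (hC z hz)).2) x

lemma isMaxOn_expectation (hA : A.IsHermitian) {v : n → 𝕜} {l : ℝ}
    (hv : A *ᵥ v = (l : 𝕜) • v) (hunit : star v ⬝ᵥ v = 1)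
    (htop : ∀ z ∈ spectrum 𝕜 A, RCLike.re z ≤ l) :
    IsMaxOn (expectation A) {x | star x ⬝ᵥ x = 1} v := fun x hx ↦ by
  have := hA.expectation_le_of_spectrum_le htop x
  rwa [show star x ⬝ᵥ x = 1 from hx, RCLike.one_re, mul_one,
    ← expectation_eq_of_mulVec_eq_smul hv hunit] at this

lemma isMinOn_expectation (hA : A.IsHermitian) {v : n → 𝕜} {l : ℝ}
    (hv : A *ᵥ v = (l : 𝕜) • v) (hunit : star v ⬝ᵥ v = 1)
    (hbot : ∀ z ∈ spectrum 𝕜 A, l ≤ RCLike.re z) :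
    IsMinOn (expectation A) {x | star x ⬝ᵥ x = 1} v := fun x hx ↦ by
  have := hA.le_expectation_of_le_spectrum hbot x
  rwa [show star x ⬝ᵥ x = 1 from hx, RCLike.one_re, mul_one,
    ← expectation_eq_of_mulVec_eq_smul hv hunit] at this

lemma star_eigenvectorBasis_dotProduct (hA : A.IsHermitian) (i : n) :
    star ⇑(hA.eigenvectorBasis i) ⬝ᵥ ⇑(hA.eigenvectorBasis i) = 1 := by
  rw [dotProduct_comm, ← EuclideanSpace.inner_eq_star_dotProduct, inner_self_eq_norm_sq_to_K,
    hA.eigenvectorBasis.orthonormal.1 i]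
  norm_num

lemma expectation_eigenvectorBasis (hA : A.IsHermitian) (i : n) :
    expectation A (hA.eigenvectorBasis i) = hA.eigenvalues i :=
  (hA.eigenvalues_eq i).symm

lemma eq_smul_one_of_eigenvalues_eq (hA : A.IsHermitian) {c : ℝ}
    (hc : ∀ i, hA.eigenvalues i = c) : A = (c : 𝕜) • 1 := by
  have hdiag : diagonal (RCLike.ofReal ∘ hA.eigenvalues) = algebraMap 𝕜 (Matrix n n 𝕜) c := by
    rw [algebraMap_eq_diagonal]
    congr 1
    funext i
    simp [hc]
  rw [hA.spectral_theorem, hdiag, AlgHomClass.commutes, Algebra.algebraMap_eq_smul_one]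

end IsHermitian

end Matrix

theorem stmt17_general {N : ℕ} (hN : 0 < N) (H₀ H₁ : Matrix (Fin N) (Fin N) ℂ)
    (h0 : H₀ᴴ = H₀) (h1 : H₁ᴴ = H₁)
    (vmax vmin : ℝ → (Fin N → ℂ)) (lmax lmin : ℝ → ℝ)
    (hvmax_cont : Continuous vmax) (hvmin_cont : Continuous vmin)
    (hvmax_unit : ∀ μ, star (vmax μ) ⬝ᵥ vmax μ = 1)
    (hvmin_unit : ∀ μ, star (vmin μ) ⬝ᵥ vmin μ = 1)
    (hvmax_eig : ∀ μ, (((1 : ℝ) / (|μ| + 1)) • (H₀ + (μ : ℂ) • H₁)).mulVec (vmax μ)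
      = (lmax μ : ℂ) • vmax μ)
    (hvmin_eig : ∀ μ, (((1 : ℝ) / (|μ| + 1)) • (H₀ + (μ : ℂ) • H₁)).mulVec (vmin μ)
      = (lmin μ : ℂ) • vmin μ)
    (hvmax_top : ∀ μ, ∀ z ∈ spectrum ℂ (((1 : ℝ) / (|μ| + 1)) • (H₀ + (μ : ℂ) • H₁)),
      z.re ≤ lmax μ)
    (hvmin_bot : ∀ μ, ∀ z ∈ spectrum ℂ (((1 : ℝ) / (|μ| + 1)) • (H₀ + (μ : ℂ) • H₁)),
      lmin μ ≤ z.re) :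
    (∃ c : ℝ, H₁ = (c : ℂ) • (1 : Matrix (Fin N) (Fin N) ℂ)) ∨
    ∃ μ : ℝ, star (vmax μ) ⬝ᵥ H₁.mulVec (vmax μ)
      = star (vmin μ) ⬝ᵥ H₁.mulVec (vmin μ) := by
  have hH₀ : H₀.IsHermitian := h0
  have hH₁ : H₁.IsHermitian := h1
  by_cases hscalar : ∀ i, hH₁.eigenvalues i = hH₁.eigenvalues ⟨0, hN⟩
  · exact Or.inl ⟨_, hH₁.eq_smul_one_of_eigenvalues_eq hscalar⟩
  right
  obtain ⟨i, j, hij⟩ : ∃ i j, hH₁.eigenvalues j < hH₁.eigenvalues i := by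
    obtain ⟨i, hi⟩ := not_forall.mp hscalar
    rcases Ne.lt_or_gt hi with h | h
    exacts [⟨_, _, h⟩, ⟨_, _, h⟩]
  have hK : ∀ μ : ℝ, (((1 : ℝ) / (|μ| + 1)) • (H₀ + (μ : ℂ) • H₁)).IsHermitian := fun μ ↦
    (hH₀.add (hH₁.smul (Complex.conj_ofReal μ))).smul (IsSelfAdjoint.all _)
  have hexp : ∀ μ : ℝ, expectation (((1 : ℝ) / (|μ| + 1)) • (H₀ + (μ : ℂ) • H₁)) =
      fun x ↦ 1 / (|μ| + 1) * (expectation H₀ x + μ * expectation H₁ x) := fun μ ↦ by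
    funext x
    rw [expectation_real_smul, expectation_add, Complex.coe_smul, expectation_real_smul]
  have hmax : ∀ μ : ℝ, IsMaxOn (fun x ↦ expectation H₀ x + μ * expectation H₁ x)
      {x | star x ⬝ᵥ x = 1} (vmax μ) := fun μ ↦
    .of_const_mul (by positivity) (hexp μ ▸
      (hK μ).isMaxOn_expectation (hvmax_eig μ) (hvmax_unit μ) (hvmax_top μ))
  have hmin : ∀ μ : ℝ, IsMinOn (fun x ↦ expectation H₀ x + μ * expectation H₁ x)
      {x | star x ⬝ᵥ x = 1} (vmin μ) := fun μ ↦
    .of_const_mul (by positivity) (hexp μ ▸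
      (hK μ).isMinOn_expectation (hvmin_eig μ) (hvmin_unit μ) (hvmin_bot μ))
  obtain ⟨C, hC⟩ := hH₀.exists_abs_expectation_le
  obtain ⟨μ, hμ⟩ := exists_eq_of_isMaxOn_of_isMinOn hvmax_unit hvmin_unit hmax hmin hC
    (((continuous_expectation H₁).comp hvmax_cont).sub
      ((continuous_expectation H₁).comp hvmin_cont))
    (hH₁.star_eigenvectorBasis_dotProduct i) (hH₁.star_eigenvectorBasis_dotProduct j)
    (by rwa [hH₁.expectation_eigenvectorBasis, hH₁.expectation_eigenvectorBasis])
  exact ⟨μ, by rw [← hH₁.ofReal_expectation, ← hH₁.ofReal_expectation, hμ]⟩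

/-- Let `H₀, H₁` be Hermitian, `H₁` with extreme eigenvalues `λ_max, λ_min`, and
suppose `H₀ + μH₁` has `N` distinct eigenvalues for every `μ ∈ ℝ`. Given continuous
unit eigenvector selections `v^max(μ)`, `v_min(μ)` for the largest and smallest
eigenvalues of `(H₀+μH₁)/(|μ|+1)` (equivalently of `H₀+μH₁`), either `H₁` is a scalar
multiple of the identity, or there is a finite `μ` with
`⟨v^max(μ), H₁ v^max(μ)⟩ = ⟨v_min(μ), H₁ v_min(μ)⟩`. -/
theorem stmt17 {N : ℕ} (hN : 0 < N) (H₀ H₁ : Matrix (Fin N) (Fin N) ℂ)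
    (h0 : H₀ᴴ = H₀) (h1 : H₁ᴴ = H₁)
    (hdistinct : ∀ μ : ℝ, (spectrum ℂ (H₀ + (μ : ℂ) • H₁)).ncard = N)
    (vmax vmin : ℝ → (Fin N → ℂ)) (lmax lmin : ℝ → ℝ)
    (hvmax_cont : Continuous vmax) (hvmin_cont : Continuous vmin)
    (hvmax_unit : ∀ μ, star (vmax μ) ⬝ᵥ vmax μ = 1)
    (hvmin_unit : ∀ μ, star (vmin μ) ⬝ᵥ vmin μ = 1)
    (hvmax_eig : ∀ μ, (((1 : ℝ) / (|μ| + 1)) • (H₀ + (μ : ℂ) • H₁)).mulVec (vmax μ)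
      = (lmax μ : ℂ) • vmax μ)
    (hvmin_eig : ∀ μ, (((1 : ℝ) / (|μ| + 1)) • (H₀ + (μ : ℂ) • H₁)).mulVec (vmin μ)
      = (lmin μ : ℂ) • vmin μ)
    (hvmax_top : ∀ μ, ∀ z ∈ spectrum ℂ (((1 : ℝ) / (|μ| + 1)) • (H₀ + (μ : ℂ) • H₁)),
      z.re ≤ lmax μ)
    (hvmin_bot : ∀ μ, ∀ z ∈ spectrum ℂ (((1 : ℝ) / (|μ| + 1)) • (H₀ + (μ : ℂ) • H₁)),
      lmin μ ≤ z.re) :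
    (∃ c : ℝ, H₁ = (c : ℂ) • (1 : Matrix (Fin N) (Fin N) ℂ)) ∨
    ∃ μ : ℝ, star (vmax μ) ⬝ᵥ H₁.mulVec (vmax μ)
      = star (vmin μ) ⬝ᵥ H₁.mulVec (vmin μ) :=
  stmt17_general hN H₀ H₁ h0 h1 vmax vmin lmax lmin hvmax_cont hvmin_cont hvmax_unit hvmin_unit
    hvmax_eig hvmin_eig hvmax_top hvmin_bot
end

section
/- Let f ≡ μ be a constant control for the system H = H₀ + f(t)H₁ and let λ₁,…,λ_N be the eigenvalues of H₀ + μH₁. Then the gradient of the endpoint map f ↦ U_f(T), given by τ ↦ −i·U_μ(T,τ)H₁U_μ(τ), takes values (as a function of τ ∈ [0,T]) in a real linear span of at most N² − N + 1 functions, namely 1, cos((λ_j−λ_k)τ), sin((λ_j−λ_k)τ) for 1 ≤ j < k ≤ N, tensored with fixed matrices; in particular, since dim u(N) = N², the Jacobian of the endpoint map at any constant control is not of full rank. -/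
/-!
In an eigenbasis of `H₀ + μH₁` the propagator is diagonal, so conjugating `H₁` by `U(τ)`
multiplies its `(j, k)` entry by `exp(i(λⱼ - λₖ)τ)`. Pairing the `(j, k)` and `(k, j)` terms
turns these phases into `1`, `cos((λⱼ - λₖ)τ)` and `sin((λⱼ - λₖ)τ)` for `j < k`: at most
`N² - N + 1` real functions. Their matrix coefficients span a real space of dimension `< N²`,
while `X ↦ (X - Xᵀ) + i(X + Xᵀ)` embeds the `N²`-dimensional space of real matrices into the
skew-Hermitian ones, so some nonzero skew-Hermitian `D` is orthogonal to all of them.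
-/

open Matrix

theorem Complex.exp_mul_I_smul_add_exp_neg_mul_I_smul {E : Type*} [AddCommGroup E] [Module ℂ E]
    (θ : ℝ) (x y : E) :
    Complex.exp (θ * Complex.I) • x + Complex.exp (-θ * Complex.I) • y =
      (Real.cos θ : ℂ) • (x + y) + (Real.sin θ : ℂ) • (Complex.I • (x - y)) := by
  rw [Complex.exp_mul_I, Complex.exp_mul_I, Complex.cos_neg, Complex.sin_neg,
    Complex.ofReal_cos, Complex.ofReal_sin]
  module

section Trig

variable {n : Type*} [LinearOrder n]

variable (n) in
abbrev TrigIndex := Option ({q : n × n // q.1 < q.2} ⊕ {q : n × n // q.1 < q.2})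

noncomputable def trigFun (lam : n → ℝ) : TrigIndex n → ℝ → ℝ
  | none => fun _ => 1
  | some (.inl p) => fun τ => Real.cos ((lam p.1.1 - lam p.1.2) * τ)
  | some (.inr p) => fun τ => Real.sin ((lam p.1.1 - lam p.1.2) * τ)

theorem trigFun_eq_one_or_cos_or_sin (lam : n → ℝ) (i : TrigIndex n) :
    trigFun lam i = (fun _ => 1) ∨ ∃ j k : n, j < k ∧
      ((trigFun lam i = fun τ => Real.cos ((lam j - lam k) * τ)) ∨
        (trigFun lam i = fun τ => Real.sin ((lam j - lam k) * τ))) := by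
  rcases i with _ | p | p
  · exact .inl rfl
  · exact .inr ⟨p.1.1, p.1.2, p.2, .inl rfl⟩
  · exact .inr ⟨p.1.1, p.1.2, p.2, .inr rfl⟩

variable [Fintype n]

theorem sum_subtype_fst_lt_eq_sum_ite {M : Type*} [AddCommMonoid M] (f : n × n → M) :
    ∑ p : {q : n × n // q.1 < q.2}, f p = ∑ q, if q.1 < q.2 then f q else 0 := by
  rw [← Finset.sum_filter]
  exact (Finset.sum_subtype _ (by simp) f).symm

theorem sum_prod_self_eq_sum_diag_add_sum_lt {M : Type*} [AddCommMonoid M] (f : n × n → M) :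
    ∑ q, f q = ∑ j, f (j, j) + ∑ p : {q : n × n // q.1 < q.2}, (f p + f p.1.swap) := by
  have hsplit : ∀ q : n × n, f q = (if q.1 = q.2 then f q else 0) +
      ((if q.1 < q.2 then f q else 0) + (if q.2 < q.1 then f q else 0)) := by
    intro q
    rcases lt_trichotomy q.1 q.2 with h | h | h
    · simp [h, h.ne, h.not_gt]
    · simp [h]
    · simp [h, h.ne', h.not_gt]
  have hdiag : ∑ q : n × n, (if q.1 = q.2 then f q else 0) = ∑ j, f (j, j) := by
    simp [Fintype.sum_prod_type]
  have hgt : ∑ q : n × n, (if q.2 < q.1 then f q else 0) =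
      ∑ p : {q : n × n // q.1 < q.2}, f p.1.swap := by
    rw [← (Equiv.prodComm n n).sum_comp]
    exact (sum_subtype_fst_lt_eq_sum_ite (f ∘ Prod.swap)).symm
  rw [Fintype.sum_congr _ _ hsplit, Finset.sum_add_distrib, Finset.sum_add_distrib, hdiag, hgt,
    ← sum_subtype_fst_lt_eq_sum_ite, Finset.sum_add_distrib]

def trigCoeff {E : Type*} [AddCommGroup E] [Module ℂ E] (P : n → n → E) : TrigIndex n → E
  | none => ∑ j, P j j
  | some (.inl p) => P p.1.1 p.1.2 + P p.1.2 p.1.1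
  | some (.inr p) => Complex.I • (P p.1.1 p.1.2 - P p.1.2 p.1.1)

theorem card_trigIndex_add_card : Fintype.card (TrigIndex n) + Fintype.card n =
    Fintype.card n ^ 2 + 1 := by
  have h := sum_prod_self_eq_sum_diag_add_sum_lt (n := n) (fun _ => 1)
  simp only [Finset.sum_const, Finset.card_univ, Fintype.card_prod, smul_eq_mul, mul_one] at h
  simp only [Fintype.card_option, Fintype.card_sum]
  rw [sq, h]
  ring

theorem sum_exp_smul_eq_sum_trigFun_smul {E : Type*} [AddCommGroup E] [Module ℂ E]
    (lam : n → ℝ) (P : n → n → E) (τ : ℝ) :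
    ∑ q : n × n, Complex.exp (((lam q.1 - lam q.2) * τ : ℝ) * Complex.I) • P q.1 q.2 =
      ∑ i, (trigFun lam i τ : ℂ) • trigCoeff P i := by
  rw [sum_prod_self_eq_sum_diag_add_sum_lt, Fintype.sum_option, Fintype.sum_sum_type,
    ← Finset.sum_add_distrib]
  congr 1
  · simp [trigFun, trigCoeff]
  · refine Fintype.sum_congr _ _ fun p => ?_
    have hswap : ((lam p.1.2 - lam p.1.1) * τ : ℝ) = -((lam p.1.1 - lam p.1.2) * τ) := by ring
    simp only [Prod.fst_swap, Prod.snd_swap, hswap, Complex.ofReal_neg]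
    exact Complex.exp_mul_I_smul_add_exp_neg_mul_I_smul _ _ _

end Trig

section SkewHermitian

variable {n : Type*}

def skewHermitianOfReal : Matrix n n ℝ →ₗ[ℝ] Matrix n n ℂ where
  toFun X := of fun a b => ⟨X a b - X b a, X a b + X b a⟩
  map_add' X Y := by ext a b; apply Complex.ext <;> simp <;> ring
  map_smul' c X := by ext a b; apply Complex.ext <;> simp <;> ring

theorem conjTranspose_skewHermitianOfReal (X : Matrix n n ℝ) :
    (skewHermitianOfReal X)ᴴ = -skewHermitianOfReal X := by
  ext a b; apply Complex.ext <;> simp [skewHermitianOfReal]; ring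

theorem skewHermitianOfReal_injective : Function.Injective (skewHermitianOfReal (n := n)) := by
  refine (injective_iff_map_eq_zero _).mpr fun X hX => ?_
  ext a b
  have hre := congrArg (fun D => (D a b).re) hX
  have him := congrArg (fun D => (D a b).im) hX
  simp only [skewHermitianOfReal, LinearMap.coe_mk, AddHom.coe_mk, of_apply, Matrix.zero_apply,
    Complex.zero_re, Complex.zero_im] at hre him
  rw [Matrix.zero_apply]
  linarith

theorem exists_skewHermitian_forall_re_trace_eq_zero [Fintype n] {ι : Type*} [Fintype ι]
    (M : ι → Matrix n n ℂ) (hcard : Fintype.card ι < Fintype.card n ^ 2) :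
    ∃ D : Matrix n n ℂ, D ≠ 0 ∧ Dᴴ = -D ∧ ∀ i, (trace (Dᴴ * M i)).re = 0 := by
  let pairing : Matrix n n ℂ →ₗ[ℝ] ι → ℝ := LinearMap.pi fun i =>
    Complex.reLm ∘ₗ ((traceLinearMap n ℂ ℂ ∘ₗ LinearMap.mulRight ℂ (M i)).restrictScalars ℝ)
  have hker : LinearMap.ker (pairing ∘ₗ skewHermitianOfReal) ≠ ⊥ := by
    refine LinearMap.ker_ne_bot_of_finrank_lt ?_
    simpa [Module.finrank_matrix, sq] using hcard
  obtain ⟨X, hX, hX0⟩ := Submodule.exists_mem_ne_zero_of_ne_bot hker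
  refine ⟨skewHermitianOfReal X, (map_ne_zero_iff _ skewHermitianOfReal_injective).mpr hX0,
    conjTranspose_skewHermitianOfReal X, fun i => ?_⟩
  have hre : (trace (skewHermitianOfReal X * M i)).re = 0 :=
    congrFun (LinearMap.mem_ker.mp hX) i
  rw [conjTranspose_skewHermitianOfReal, neg_mul, trace_neg, Complex.neg_re, hre, neg_zero]

end SkewHermitian

namespace Matrix.IsHermitian

variable {n : Type*} [Fintype n] [DecidableEq n] {A : Matrix n n ℂ}

noncomputable def eigenprojection (hA : A.IsHermitian) (j : n) : Matrix n n ℂ :=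
  (hA.eigenvectorUnitary : Matrix n n ℂ) * single j j 1 *
    star (hA.eigenvectorUnitary : Matrix n n ℂ)

theorem exp_smul_eq_sum_eigenprojection (hA : A.IsHermitian) (c : ℂ) :
    NormedSpace.exp (c • A) =
      ∑ j, Complex.exp (c * hA.eigenvalues j) • hA.eigenprojection j := by
  set V : Matrix n n ℂ := (hA.eigenvectorUnitary : Matrix n n ℂ)
  have hV : IsUnit V := (Unitary.toUnits hA.eigenvectorUnitary).isUnit
  have hVinv : V⁻¹ = star V := inv_eq_left_inv (Unitary.coe_star_mul_self _)
  conv_lhs => rw [hA.spectral_theorem, Unitary.conjStarAlgAut_apply, ← hVinv, ← smul_mul_assoc,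
    ← mul_smul_comm, exp_conj _ _ hV, ← diagonal_smul, exp_diagonal, hVinv,
    ← sum_single_eq_diagonal]
  simp only [Finset.mul_sum, Finset.sum_mul]
  refine Finset.sum_congr rfl fun j _ => ?_
  rw [eigenprojection, Pi.coe_exp, ← Complex.exp_eq_exp_ℂ, ← smul_mul_assoc, ← mul_smul_comm,
    smul_single, smul_eq_mul, mul_one]
  rfl

theorem conjTranspose_exp_smul (hA : A.IsHermitian) (c : ℂ) :
    (NormedSpace.exp (c • A))ᴴ = NormedSpace.exp (star c • A) := by
  rw [← exp_conjTranspose, conjTranspose_smul, hA.eq]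

theorem conjTranspose_exp_mul_mul_exp (hA : A.IsHermitian) (H : Matrix n n ℂ) (τ : ℝ) :
    (NormedSpace.exp ((-(Complex.I * τ)) • A))ᴴ * H * NormedSpace.exp ((-(Complex.I * τ)) • A) =
      ∑ q : n × n, Complex.exp (((hA.eigenvalues q.1 - hA.eigenvalues q.2) * τ : ℝ) * Complex.I) •
        (hA.eigenprojection q.1 * H * hA.eigenprojection q.2) := by
  rw [hA.conjTranspose_exp_smul, hA.exp_smul_eq_sum_eigenprojection,
    hA.exp_smul_eq_sum_eigenprojection, Finset.sum_mul, Finset.sum_mul_sum,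
    ← Finset.univ_product_univ, Finset.sum_product]
  refine Finset.sum_congr rfl fun j _ => Finset.sum_congr rfl fun k _ => ?_
  rw [smul_mul_assoc, smul_mul_assoc, mul_smul_comm, smul_smul, ← Complex.exp_add]
  congr 2
  simp only [star_neg, star_mul', Complex.star_def, Complex.conj_I, Complex.conj_ofReal]
  push_cast
  ring

end Matrix.IsHermitian

theorem stmt19_general {N : ℕ} (hN : 2 ≤ N) (H₀ H₁ : Matrix (Fin N) (Fin N) ℂ)
    (μ T : ℝ)
    (hHerm : (H₀ + (μ : ℂ) • H₁).IsHermitian)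
    (U : ℝ → Matrix (Fin N) (Fin N) ℂ)
    (hU : ∀ t, U t = NormedSpace.exp ((-(Complex.I * t)) • (H₀ + (μ : ℂ) • H₁))) :
    ∃ m : ℕ, m ≤ N ^ 2 - N + 1 ∧
      ∃ (g : Fin m → ℝ → ℝ) (M : Fin m → Matrix (Fin N) (Fin N) ℂ),
        (∀ i, (g i = fun _ => 1) ∨
          ∃ j k : Fin N, j < k ∧
            ((g i = fun τ => Real.cos ((hHerm.eigenvalues j - hHerm.eigenvalues k) * τ)) ∨
             (g i = fun τ => Real.sin ((hHerm.eigenvalues j - hHerm.eigenvalues k) * τ)))) ∧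
        (∀ τ : ℝ, (-Complex.I) • (U T * (U τ)ᴴ * H₁ * U τ) =
          ∑ i, ((g i τ : ℝ) : ℂ) • M i) ∧
        ∃ D : Matrix (Fin N) (Fin N) ℂ, D ≠ 0 ∧ Dᴴ = -D ∧
          ∀ τ : ℝ,
            (Matrix.trace (Dᴴ * ((-Complex.I) • (U T * (U τ)ᴴ * H₁ * U τ)))).re = 0 := by
  set P : Fin N → Fin N → Matrix (Fin N) (Fin N) ℂ := fun j k =>
    (-Complex.I) • (U T * (hHerm.eigenprojection j * H₁ * hHerm.eigenprojection k))
  have hgrad : ∀ τ : ℝ, (-Complex.I) • (U T * (U τ)ᴴ * H₁ * U τ) =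
      ∑ i, (trigFun hHerm.eigenvalues i τ : ℂ) • trigCoeff P i := by
    intro τ
    rw [← sum_exp_smul_eq_sum_trigFun_smul, mul_assoc, mul_assoc, ← mul_assoc (U τ)ᴴ, hU τ,
      hHerm.conjTranspose_exp_mul_mul_exp, Finset.mul_sum, Finset.smul_sum]
    simp only [P, mul_smul_comm, smul_comm (-Complex.I)]
  have hcard := card_trigIndex_add_card (n := Fin N)
  simp only [Fintype.card_fin] at hcard
  obtain ⟨D, hD0, hDskew, hDorth⟩ :=
    exists_skewHermitian_forall_re_trace_eq_zero (trigCoeff P) (by rw [Fintype.card_fin]; omega)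
  let e := Fintype.equivFin (TrigIndex (Fin N))
  refine ⟨Fintype.card (TrigIndex (Fin N)), by omega,
    fun i => trigFun hHerm.eigenvalues (e.symm i), fun i => trigCoeff P (e.symm i),
    fun i => trigFun_eq_one_or_cos_or_sin _ _,
    fun τ => by rw [hgrad τ]; exact (e.symm.sum_comp _).symm, D, hD0, hDskew, fun τ => ?_⟩
  rw [hgrad τ, Finset.mul_sum, trace_sum, Complex.re_sum]
  refine Finset.sum_eq_zero fun i _ => ?_
  rw [mul_smul_comm, trace_smul, smul_eq_mul, Complex.re_ofReal_mul, hDorth, mul_zero]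

/-- At a constant control `f ≡ μ`, with `λ₁,…,λ_N` the eigenvalues of `H₀ + μH₁` and
`U(t) = e^{-it(H₀+μH₁)}`, the gradient of the endpoint map,
`τ ↦ -i·U(T)U(τ)†H₁U(τ)`, takes values in the span of at most `N² - N + 1`
functions—`1`, `cos((λⱼ-λₖ)τ)`, `sin((λⱼ-λₖ)τ)` for `j < k`—tensored with fixed
matrices; in particular (since `dim u(N) = N²`) the Jacobian of the endpoint map at a
constant control is not of full rank: some nonzero anti-Hermitian direction `D` is
orthogonal to all its values. -/
theorem stmt19 {N : ℕ} (hN : 2 ≤ N) (H₀ H₁ : Matrix (Fin N) (Fin N) ℂ)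
    (h0 : H₀ᴴ = H₀) (h1 : H₁ᴴ = H₁) (μ T : ℝ)
    (hHerm : (H₀ + (μ : ℂ) • H₁).IsHermitian)
    (U : ℝ → Matrix (Fin N) (Fin N) ℂ)
    (hU : ∀ t, U t = NormedSpace.exp ((-(Complex.I * t)) • (H₀ + (μ : ℂ) • H₁))) :
    ∃ m : ℕ, m ≤ N ^ 2 - N + 1 ∧
      ∃ (g : Fin m → ℝ → ℝ) (M : Fin m → Matrix (Fin N) (Fin N) ℂ),
        (∀ i, (g i = fun _ => 1) ∨
          ∃ j k : Fin N, j < k ∧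
            ((g i = fun τ => Real.cos ((hHerm.eigenvalues j - hHerm.eigenvalues k) * τ)) ∨
             (g i = fun τ => Real.sin ((hHerm.eigenvalues j - hHerm.eigenvalues k) * τ)))) ∧
        (∀ τ : ℝ, (-Complex.I) • (U T * (U τ)ᴴ * H₁ * U τ) =
          ∑ i, ((g i τ : ℝ) : ℂ) • M i) ∧
        ∃ D : Matrix (Fin N) (Fin N) ℂ, D ≠ 0 ∧ Dᴴ = -D ∧
          ∀ τ : ℝ,
            (Matrix.trace (Dᴴ * ((-Complex.I) • (U T * (U τ)ᴴ * H₁ * U τ)))).re = 0 :=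
  stmt19_general hN H₀ H₁ μ T hHerm U hU
end
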